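/- (Temporal oscillation bound, Besov case) Let α ∈ (0,1), r ∈ [1,∞), and suppose [f]_r := ( ∫_0^T h^{−rα} ‖τ_h f‖_{L²}^r dh/h )^{1/r} < ∞. Then there exists a constant C, depending only on α and r (in particular independent of T, N, τ and f), such that (1/τ) · Σ_{n=1}^{N} ∫_ℝ ∫_ℝ a_n(s) a_n(t) ‖f(s) − f(t)‖_H² dt ds ≤ C · τ^{2α} · [f]_r². -/

import Mathlib

open MeasureTheory
open scoped ENNReal

/-- The interval `J_n`: `J_0 = [0, τ/2]` and `J_n = [nτ − τ/2, nτ + τ/2]` for `n ≥ 1`,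
where `τ = T/(N+1)`. -/
noncomputable def Jint (T : ℝ) (N : ℕ) (n : ℕ) : Set ℝ :=
  let τ := T / (N + 1)
  if n = 0 then Set.Icc 0 (τ / 2)
  else Set.Icc ((n : ℝ) * τ - τ / 2) ((n : ℝ) * τ + τ / 2)

/-- The weight functions `a_n` from the robust temporal discretization:
`a_1(t) = 1_{J_0}(t) + ((t_1 + τ/2 − t)/τ)·1_{J_1}(t)` and, for `n ≥ 2`,
`a_n(t) = ((t − (t_{n−1} − τ/2))/τ)·1_{J_{n−1}}(t) + ((t_n + τ/2 − t)/τ)·1_{J_n}(t)`,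
where `τ = T/(N+1)` and `t_n = nτ`. -/
noncomputable def aWeight (T : ℝ) (N : ℕ) (n : ℕ) (t : ℝ) : ℝ :=
  let τ := T / (N + 1)
  if n = 1 then
    (Jint T N 0).indicator (fun _ => (1 : ℝ)) t
      + (Jint T N 1).indicator (fun s => (τ + τ / 2 - s) / τ) t
  else
    (Jint T N (n - 1)).indicator (fun s => (s - (((n : ℝ) - 1) * τ - τ / 2)) / τ) t
      + (Jint T N n).indicator (fun s => ((n : ℝ) * τ + τ / 2 - s) / τ) t

/-- The temporal oscillation
`(1/τ) Σ_{n=1}^N ∫_ℝ ∫_ℝ a_n(s) a_n(t) ‖f(s) − f(t)‖² dt ds`. -/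
noncomputable def tempOsc (T : ℝ) (N : ℕ) {H : Type*} [NormedAddCommGroup H]
    (f : ℝ → H) : ℝ≥0∞ :=
  (ENNReal.ofReal (T / (N + 1)))⁻¹ *
    ∑ n ∈ Finset.Icc 1 N,
      ∫⁻ s, ∫⁻ t,
        ENNReal.ofReal (aWeight T N n s) * ENNReal.ofReal (aWeight T N n t)
          * ENNReal.ofReal (‖f s - f t‖ ^ 2) ∂(volume) ∂(volume)

/-- The squared `L²` norm of the time increment, `‖τ_h f‖_{L²}² = ∫_0^{T−h} ‖f(t+h) − f(t)‖² dt`. -/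
noncomputable def sqIncrementNorm (T : ℝ) {H : Type*} [NormedAddCommGroup H]
    (f : ℝ → H) (h : ℝ) : ℝ≥0∞ :=
  ∫⁻ t in Set.Ioc (0 : ℝ) (T - h), ENNReal.ofReal (‖f (t + h) - f t‖ ^ 2)

/-- The Besov seminorm `[f]_r := ( ∫_0^T h^{−rα} ‖τ_h f‖_{L²}^r dh/h )^{1/r}`. -/
noncomputable def besovSemi (T α r : ℝ) {H : Type*} [NormedAddCommGroup H]
    (f : ℝ → H) : ℝ≥0∞ :=
  (∫⁻ h in Set.Ioo (0 : ℝ) T,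
      ENNReal.ofReal h ^ (-(r * α) - 1)
        * (sqIncrementNorm T f h ^ ((1 : ℝ) / 2)) ^ r) ^ (1 / r)

/-!
Each weight `a_n` is at most `2` and lives on a window of length `2τ`, and every time lies in at
most three windows; so the temporal oscillation is at most `12/τ` times the energy
`∫∫_{|t-s| ≤ 2τ} ‖f s - f t‖²` of `f` near the diagonal of `[0,T]²`. Substituting `t = s + h`,
that energy is at most `4τ · sup_{0 < h ≤ 2τ} ‖τ_h f‖²`. Finally, the increments are
quasi-subadditive, `‖τ_{a+b} f‖² ≤ 2 (‖τ_a f‖² + ‖τ_b f‖²)`; averaging this over `a + b = h`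
gives `h ‖τ_h f‖^r ≲ ∫_0^h ‖τ_u f‖^r du ≤ h^{rα+1} [f]_r^r`, i.e. `‖τ_h f‖² ≲ h^{2α} [f]_r²`.
-/

open Set

lemma Finset.card_le_of_forall_le_add {F : Finset ℕ} {k : ℕ}
    (h : ∀ m ∈ F, ∀ n ∈ F, n ≤ m + k) : F.card ≤ k + 1 := by
  rcases F.eq_empty_or_nonempty with rfl | hF
  · simp
  · calc F.card ≤ (Finset.Icc (F.min' hF) (F.min' hF + k)).card :=
          Finset.card_le_card fun n hn =>
            Finset.mem_Icc.2 ⟨F.min'_le n hn, h _ (F.min'_mem hF) n hn⟩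
      _ = k + 1 := by rw [Nat.card_Icc]; omega

lemma sum_lintegral_le_lintegral_sum {α ι : Type*} [MeasurableSpace α] {μ : Measure α}
    (s : Finset ι) (f : ι → α → ℝ≥0∞) :
    ∑ i ∈ s, ∫⁻ a, f i a ∂μ ≤ ∫⁻ a, ∑ i ∈ s, f i a ∂μ := by
  classical
  induction s using Finset.induction_on with
  | empty => simp
  | insert i s hi ih =>
    simp_rw [Finset.sum_insert hi]
    exact (add_le_add le_rfl ih).trans (le_lintegral_add _ _)

lemma indicator_le_indicator_one {α : Type*} {J W : Set α} (hJW : J ⊆ W) {g : α → ℝ}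
    (hg : ∀ x ∈ J, g x ≤ 1) (t : α) : J.indicator g t ≤ W.indicator 1 t := by
  by_cases ht : t ∈ J
  · rw [indicator_of_mem ht, indicator_of_mem (hJW ht)]
    exact hg t ht
  · rw [indicator_of_notMem ht]
    exact indicator_nonneg (fun _ _ => zero_le_one) t

lemma ENNReal.add_rpow_le_two_rpow_mul (x y : ℝ≥0∞) {p : ℝ} (hp : 0 ≤ p) :
    (x + y) ^ p ≤ 2 ^ p * (x ^ p + y ^ p) :=
  calc (x + y) ^ p ≤ (2 * max x y) ^ p :=
        ENNReal.rpow_le_rpow (two_mul (max x y) ▸ add_le_add le_sup_left le_sup_right) hp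
    _ = 2 ^ p * max (x ^ p) (y ^ p) := by
        rw [ENNReal.mul_rpow_of_nonneg _ _ hp, ENNReal.max_rpow hp]
    _ ≤ 2 ^ p * (x ^ p + y ^ p) := by gcongr; exact max_le le_self_add le_add_self

lemma ofReal_mul_le_two_mul_setLIntegral {ψ : ℝ → ℝ≥0∞} (hψ : Measurable ψ) {K : ℝ≥0∞}
    (hK : K ≠ ⊤) {h : ℝ} (hsub : ∀ u ∈ Ioo 0 h, ψ h ≤ K * (ψ u + ψ (h - u))) :
    ENNReal.ofReal h * ψ h ≤ 2 * K * ∫⁻ u in Ioo 0 h, ψ u := by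
  have hreflect : ∫⁻ u in Ioo 0 h, ψ (h - u) = ∫⁻ u in Ioo 0 h, ψ u := by
    rw [← lintegral_indicator measurableSet_Ioo, ← lintegral_indicator measurableSet_Ioo,
      ← lintegral_sub_left_eq_self _ h]
    refine lintegral_congr fun u => ?_
    simp only [indicator_apply, mem_Ioo, sub_sub_cancel]
    exact if_congr ⟨fun hu => ⟨by linarith, by linarith⟩, fun hu => ⟨by linarith, by linarith⟩⟩
      rfl rfl
  calc ENNReal.ofReal h * ψ h = ∫⁻ _ in Ioo 0 h, ψ h := by
        rw [setLIntegral_const, Real.volume_Ioo, sub_zero, mul_comm]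
    _ ≤ ∫⁻ u in Ioo 0 h, K * (ψ u + ψ (h - u)) := setLIntegral_mono' measurableSet_Ioo hsub
    _ = 2 * K * ∫⁻ u in Ioo 0 h, ψ u := by
        rw [lintegral_const_mul' _ _ hK, lintegral_add_left hψ, hreflect]
        ring

section Increments

variable {H : Type*} [NormedAddCommGroup H] {T : ℝ} {f : ℝ → H}

lemma ofReal_norm_sub_sq_le (a b c : H) :
    ENNReal.ofReal (‖a - c‖ ^ 2)
      ≤ 2 * (ENNReal.ofReal (‖a - b‖ ^ 2) + ENNReal.ofReal (‖b - c‖ ^ 2)) := by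
  have h : ‖a - c‖ ^ 2 ≤ 2 * (‖a - b‖ ^ 2 + ‖b - c‖ ^ 2) := by
    nlinarith [norm_sub_le_norm_sub_add_norm_sub a b c, add_sq_le (a := ‖a - b‖) (b := ‖b - c‖),
      norm_nonneg (a - c)]
  refine (ENNReal.ofReal_le_ofReal h).trans_eq ?_
  rw [ENNReal.ofReal_mul zero_le_two, ENNReal.ofReal_add (by positivity) (by positivity),
    ENNReal.ofReal_ofNat]

lemma measurable_ofReal_norm_sub_sq {α : Type*} [MeasurableSpace α] (hf : StronglyMeasurable f)
    {g₁ g₂ : α → ℝ} (hg₁ : Measurable g₁) (hg₂ : Measurable g₂) :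
    Measurable fun p => ENNReal.ofReal (‖f (g₁ p) - f (g₂ p)‖ ^ 2) :=
  ENNReal.measurable_ofReal.comp
    ((((hf.comp_measurable hg₁).sub (hf.comp_measurable hg₂)).norm.measurable).pow_const 2)

lemma measurable_sqIncrementNorm (hf : StronglyMeasurable f) :
    Measurable (sqIncrementNorm T f) := by
  have hset : MeasurableSet {q : ℝ × ℝ | q.2 ∈ Ioc 0 (T - q.1)} :=
    (measurableSet_lt measurable_const measurable_snd).inter
      (measurableSet_le measurable_snd (measurable_const.sub measurable_fst))
  have hint := ((measurable_ofReal_norm_sub_sq hf (measurable_snd.add measurable_fst)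
    measurable_snd).indicator hset).lintegral_prod_right' (ν := volume)
  convert hint using 2 with h
  rw [sqIncrementNorm, ← lintegral_indicator measurableSet_Ioc]
  rfl

lemma sqIncrementNorm_add_le (hf : StronglyMeasurable f) {a b : ℝ} (ha : 0 ≤ a) (hb : 0 ≤ b) :
    sqIncrementNorm T f (a + b) ≤ 2 * (sqIncrementNorm T f a + sqIncrementNorm T f b) := by
  have hmeas : Measurable fun t => ENNReal.ofReal (‖f (t + (a + b)) - f (t + a)‖ ^ 2) :=
    measurable_ofReal_norm_sub_sq hf (measurable_add_const _) (measurable_add_const _)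
  have hshift : ∫⁻ t in Ioc 0 (T - (a + b)), ENNReal.ofReal (‖f (t + (a + b)) - f (t + a)‖ ^ 2)
      ≤ sqIncrementNorm T f b := by
    calc _ ≤ ∫⁻ t in (· + a) ⁻¹' Ioc 0 (T - b),
          ENNReal.ofReal (‖f (t + a + b) - f (t + a)‖ ^ 2) := by
          simp only [add_assoc]
          exact lintegral_mono_set fun t ht => ⟨by linarith [ht.1], by linarith [ht.2]⟩
      _ = sqIncrementNorm T f b :=
          (measurePreserving_add_right volume a).setLIntegral_comp_preimage_emb
            (measurableEmbedding_addRight a) (fun u => ENNReal.ofReal (‖f (u + b) - f u‖ ^ 2)) _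
  have hrestrict : ∫⁻ t in Ioc 0 (T - (a + b)), ENNReal.ofReal (‖f (t + a) - f t‖ ^ 2)
      ≤ sqIncrementNorm T f a :=
    lintegral_mono_set (Ioc_subset_Ioc_right (by linarith))
  calc sqIncrementNorm T f (a + b)
      ≤ ∫⁻ t in Ioc 0 (T - (a + b)), 2 * (ENNReal.ofReal (‖f (t + (a + b)) - f (t + a)‖ ^ 2)
          + ENNReal.ofReal (‖f (t + a) - f t‖ ^ 2)) :=
        lintegral_mono fun t => ofReal_norm_sub_sq_le _ _ _
    _ ≤ 2 * (sqIncrementNorm T f a + sqIncrementNorm T f b) := by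
        rw [lintegral_const_mul' _ _ (by norm_num), lintegral_add_left hmeas,
          add_comm (sqIncrementNorm T f a)]
        gcongr

lemma sqIncrementNorm_add_rpow_le (hf : StronglyMeasurable f) {p : ℝ} (hp : 0 ≤ p) {a b : ℝ}
    (ha : 0 ≤ a) (hb : 0 ≤ b) :
    sqIncrementNorm T f (a + b) ^ p
      ≤ 4 ^ p * (sqIncrementNorm T f a ^ p + sqIncrementNorm T f b ^ p) :=
  calc sqIncrementNorm T f (a + b) ^ p
      ≤ (2 * (sqIncrementNorm T f a + sqIncrementNorm T f b)) ^ p :=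
        ENNReal.rpow_le_rpow (sqIncrementNorm_add_le hf ha hb) hp
    _ ≤ 2 ^ p * (2 ^ p * (sqIncrementNorm T f a ^ p + sqIncrementNorm T f b ^ p)) := by
        rw [ENNReal.mul_rpow_of_nonneg _ _ hp]
        gcongr
        exact ENNReal.add_rpow_le_two_rpow_mul _ _ hp
    _ = _ := by rw [← mul_assoc, ← ENNReal.mul_rpow_of_nonneg _ _ hp]; norm_num

end Increments

section Besov

variable {H : Type*} [NormedAddCommGroup H] {T α r : ℝ} {f : ℝ → H}

lemma setLIntegral_sqIncrementNorm_rpow_le_besovSemi (hα : 0 ≤ α) (hr : 0 < r) {h : ℝ}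
    (hhT : h ≤ T) :
    ∫⁻ u in Ioo 0 h, sqIncrementNorm T f u ^ (r / 2)
      ≤ ENNReal.ofReal h ^ (r * α + 1) * besovSemi T α r f ^ r := by
  have hexp : 0 ≤ r * α + 1 := by positivity
  have hpoint : ∀ u ∈ Ioo 0 h, sqIncrementNorm T f u ^ (r / 2) ≤ ENNReal.ofReal h ^ (r * α + 1)
      * (ENNReal.ofReal u ^ (-(r * α) - 1) * (sqIncrementNorm T f u ^ ((1 : ℝ) / 2)) ^ r) := by
    intro u hu
    have hu0 : ENNReal.ofReal u ≠ 0 := by simpa using hu.1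
    calc sqIncrementNorm T f u ^ (r / 2)
        = ENNReal.ofReal u ^ (r * α + 1)
          * (ENNReal.ofReal u ^ (-(r * α) - 1) * (sqIncrementNorm T f u ^ ((1 : ℝ) / 2)) ^ r) := by
          rw [← mul_assoc, ← ENNReal.rpow_add _ _ hu0 ENNReal.ofReal_ne_top, ← ENNReal.rpow_mul,
            show r * α + 1 + (-(r * α) - 1) = 0 by ring, ENNReal.rpow_zero, one_mul,
            one_div_mul_eq_div]
      _ ≤ _ := by gcongr; exact hu.2.le
  have hbesov : besovSemi T α r f ^ r = ∫⁻ u in Ioo 0 T,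
      ENNReal.ofReal u ^ (-(r * α) - 1) * (sqIncrementNorm T f u ^ ((1 : ℝ) / 2)) ^ r := by
    rw [besovSemi, ← ENNReal.rpow_mul, one_div_mul_cancel hr.ne', ENNReal.rpow_one]
  calc _ ≤ ∫⁻ u in Ioo 0 h, ENNReal.ofReal h ^ (r * α + 1)
          * (ENNReal.ofReal u ^ (-(r * α) - 1) * (sqIncrementNorm T f u ^ ((1 : ℝ) / 2)) ^ r) :=
        setLIntegral_mono' measurableSet_Ioo hpoint
    _ ≤ _ := by
        rw [lintegral_const_mul' _ _ (ENNReal.rpow_ne_top_of_nonneg hexp ENNReal.ofReal_ne_top),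
          hbesov]
        gcongr

lemma sqIncrementNorm_le_besovSemi (hf : StronglyMeasurable f) (hα : 0 ≤ α) (hr : 1 ≤ r)
    {h : ℝ} (hh : 0 < h) (hhT : h ≤ T) :
    sqIncrementNorm T f h ≤ 16 * ENNReal.ofReal h ^ (2 * α) * besovSemi T α r f ^ 2 := by
  set S := sqIncrementNorm T f
  set B := besovSemi T α r f
  have hr0 : 0 < r := by linarith
  have hp : 0 ≤ r / 2 := by positivity
  have hsub : ∀ u ∈ Ioo 0 h, S h ^ (r / 2) ≤ 4 ^ (r / 2) * (S u ^ (r / 2) + S (h - u) ^ (r / 2)) :=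
    fun u hu => by
      simpa using sqIncrementNorm_add_rpow_le hf hp hu.1.le (sub_nonneg.2 hu.2.le)
  have hh0 : ENNReal.ofReal h ≠ 0 := by simpa using hh
  have hpow : S h ^ (r / 2) ≤ 2 * 4 ^ (r / 2) * ENNReal.ofReal h ^ (r * α) * B ^ r := by
    have := (ofReal_mul_le_two_mul_setLIntegral ((measurable_sqIncrementNorm hf).pow_const _)
      (ENNReal.rpow_ne_top_of_nonneg hp (by norm_num)) hsub).trans
        (mul_le_mul_right (setLIntegral_sqIncrementNorm_rpow_le_besovSemi hα hr0 hhT) _)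
    rw [ENNReal.rpow_add _ _ hh0 ENNReal.ofReal_ne_top, ENNReal.rpow_one] at this
    refine (ENNReal.mul_le_mul_iff_right hh0 ENNReal.ofReal_ne_top).1 (this.trans_eq ?_)
    ring
  have hconst : (2 * (4 : ℝ≥0∞) ^ (r / 2)) ^ (2 / r) ≤ 16 := by
    have h2r : (2 : ℝ≥0∞) ^ (2 / r) ≤ 2 ^ (2 : ℝ) :=
      ENNReal.rpow_le_rpow_of_exponent_le one_le_two ((div_le_iff₀ hr0).2 (by linarith))
    rw [ENNReal.mul_rpow_of_nonneg _ _ (by positivity), ← ENNReal.rpow_mul,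
      div_mul_div_cancel₀ two_ne_zero, div_self hr0.ne', ENNReal.rpow_one]
    calc (2 : ℝ≥0∞) ^ (2 / r) * 4 ≤ 2 ^ (2 : ℝ) * 4 := by gcongr
      _ = 16 := by rw [ENNReal.rpow_two]; norm_num
  calc S h = (S h ^ (r / 2)) ^ (2 / r) := by
        rw [← ENNReal.rpow_mul, div_mul_div_cancel₀ two_ne_zero, div_self hr0.ne', ENNReal.rpow_one]
    _ ≤ (2 * 4 ^ (r / 2) * ENNReal.ofReal h ^ (r * α) * B ^ r) ^ (2 / r) := by gcongr
    _ = (2 * 4 ^ (r / 2)) ^ (2 / r) * ENNReal.ofReal h ^ (2 * α) * B ^ 2 := by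
        rw [ENNReal.mul_rpow_of_nonneg _ _ (by positivity),
          ENNReal.mul_rpow_of_nonneg _ _ (by positivity), ← ENNReal.rpow_mul, ← ENNReal.rpow_mul,
          ← ENNReal.rpow_two]
        congr 3 <;> field_simp [hr0.ne']
    _ ≤ 16 * ENNReal.ofReal h ^ (2 * α) * B ^ 2 := by gcongr

end Besov

section Band

variable {H : Type*} [NormedAddCommGroup H] {T : ℝ} {f : ℝ → H}

lemma lintegral_indicator_mul_shift_eq_sqIncrementNorm {k : ℝ} (hk : 0 ≤ k) :
    ∫⁻ s, (Icc 0 T).indicator 1 s * (Icc 0 T).indicator 1 (s + k)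
        * ENNReal.ofReal (‖f (s + k) - f s‖ ^ 2)
      = sqIncrementNorm T f k := by
  have hind : ∀ s, (Icc 0 T).indicator 1 s * (Icc 0 T).indicator 1 (s + k)
      * ENNReal.ofReal (‖f (s + k) - f s‖ ^ 2)
      = (Icc 0 (T - k)).indicator (fun s => ENNReal.ofReal (‖f (s + k) - f s‖ ^ 2)) s := by
    intro s
    simp only [indicator_apply, mem_Icc, Pi.one_apply]
    split_ifs <;> first | (simp; done) | grind
  rw [lintegral_congr hind, lintegral_indicator measurableSet_Icc, sqIncrementNorm,
    setLIntegral_congr Ioc_ae_eq_Icc]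

lemma lintegral_indicator_mul_shift_eq_sqIncrementNorm_abs (h : ℝ) :
    ∫⁻ s, (Icc 0 T).indicator 1 s * (Icc 0 T).indicator 1 (s + h)
        * ENNReal.ofReal (‖f s - f (s + h)‖ ^ 2)
      = sqIncrementNorm T f |h| := by
  rcases le_total 0 h with hh | hh
  · rw [abs_of_nonneg hh, ← lintegral_indicator_mul_shift_eq_sqIncrementNorm hh]
    simp_rw [norm_sub_rev (f _) (f (_ + h))]
  · rw [abs_of_nonpos hh, ← lintegral_indicator_mul_shift_eq_sqIncrementNorm (neg_nonneg.2 hh),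
      ← lintegral_add_right_eq_self _ (-h)]
    refine lintegral_congr fun s => ?_
    rw [neg_add_cancel_right, mul_comm ((Icc 0 T).indicator 1 (s + -h))]

/-- Substituting `t = s + h` turns the band integral into `∫_{-δ}^{δ} ‖τ_{|h|} f‖² dh`. -/
lemma lintegral_lintegral_band_le (hf : StronglyMeasurable f) {δ : ℝ} {R : ℝ≥0∞}
    (hR : ∀ h ∈ Ioc 0 δ, sqIncrementNorm T f h ≤ R) :
    ∫⁻ s, ∫⁻ t, (Icc (-δ) δ).indicator 1 (t - s) * ((Icc 0 T).indicator 1 s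
        * (Icc 0 T).indicator 1 t) * ENNReal.ofReal (‖f s - f t‖ ^ 2)
      ≤ ENNReal.ofReal (2 * δ) * R := by
  set ι : ℝ → ℝ≥0∞ := (Icc (-δ) δ).indicator 1
  set χ : ℝ → ℝ≥0∞ := (Icc 0 T).indicator 1
  set F : ℝ → ℝ → ℝ≥0∞ := fun s h =>
    ι h * (χ s * χ (s + h) * ENNReal.ofReal (‖f s - f (s + h)‖ ^ 2))
  have hF : Measurable (Function.uncurry F) :=
    ((measurable_one.indicator measurableSet_Icc).comp measurable_snd).mul
      ((((measurable_one.indicator measurableSet_Icc).comp measurable_fst).mul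
        ((measurable_one.indicator measurableSet_Icc).comp (measurable_fst.add measurable_snd))).mul
        (measurable_ofReal_norm_sub_sq hf measurable_fst (measurable_fst.add measurable_snd)))
  have hι : ∀ h, ι h ≠ ⊤ := fun h => by by_cases hh : h ∈ Icc (-δ) δ <;> simp [ι, hh]
  have hbound : ∀ h, ι h * sqIncrementNorm T f |h| ≤ (Icc (-δ) δ).indicator (fun _ => R) h := by
    intro h
    by_cases hh : h ∈ Icc (-δ) δ
    · simp only [ι, indicator_of_mem hh, Pi.one_apply, one_mul]
      rcases eq_or_ne h 0 with rfl | h0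
      · simp [sqIncrementNorm]
      · exact hR |h| ⟨abs_pos.2 h0, abs_le.2 hh⟩
    · simp [ι, hh]
  calc _ = ∫⁻ s, ∫⁻ h, F s h := lintegral_congr fun s => by
        rw [← lintegral_add_left_eq_self _ s]
        refine lintegral_congr fun h => ?_
        simp only [F, add_sub_cancel_left]
        ring
    _ = ∫⁻ h, ∫⁻ s, F s h := lintegral_lintegral_swap hF.aemeasurable
    _ = ∫⁻ h, ι h * sqIncrementNorm T f |h| := lintegral_congr fun h => by
        rw [lintegral_const_mul' _ _ (hι h), lintegral_indicator_mul_shift_eq_sqIncrementNorm_abs]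
    _ ≤ ∫⁻ h, (Icc (-δ) δ).indicator (fun _ => R) h := lintegral_mono hbound
    _ = ENNReal.ofReal (2 * δ) * R := by
        rw [lintegral_indicator_const measurableSet_Icc, Real.volume_Icc, mul_comm, sub_neg_eq_add,
          two_mul]

end Band

section Weights

variable {T : ℝ} {N : ℕ}

/-- The closed interval `J_{n-1} ∪ J_n` carrying the weight `a_n`. -/
def weightWindow (τ : ℝ) (n : ℕ) : Set ℝ :=
  Icc (max 0 (((n : ℝ) - 3 / 2) * τ)) (((n : ℝ) + 1 / 2) * τ)

lemma Jint_of_ne_zero {m : ℕ} (hm : m ≠ 0) :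
    Jint T N m = Icc ((m : ℝ) * (T / (N + 1)) - T / (N + 1) / 2)
      ((m : ℝ) * (T / (N + 1)) + T / (N + 1) / 2) := by
  simp [Jint, hm]

lemma Jint_subset_weightWindow (hT : 0 < T) {m n : ℕ} (hmn : m ≤ n) (hnm : n ≤ m + 1) :
    Jint T N m ⊆ weightWindow (T / (N + 1)) n := by
  have hτ : 0 < T / (N + 1) := by positivity
  have hm : (m : ℝ) ≤ n := by exact_mod_cast hmn
  have hn : (n : ℝ) ≤ m + 1 := by exact_mod_cast hnm
  intro x hx
  rw [weightWindow, mem_Icc, max_le_iff]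
  rcases eq_or_ne m 0 with rfl | hm0
  · simp only [Jint, if_true, mem_Icc] at hx
    simp only [CharP.cast_eq_zero, zero_add] at hn
    exact ⟨⟨hx.1, by nlinarith⟩, by nlinarith⟩
  · rw [Jint_of_ne_zero hm0, mem_Icc] at hx
    have hm1 : (1 : ℝ) ≤ m := by exact_mod_cast Nat.one_le_iff_ne_zero.2 hm0
    exact ⟨⟨by nlinarith, by nlinarith⟩, by nlinarith⟩

lemma aWeight_le_two_mul_indicator (hT : 0 < T) {n : ℕ} (hn : 1 ≤ n) (t : ℝ) :
    ENNReal.ofReal (aWeight T N n t) ≤ 2 * (weightWindow (T / (N + 1)) n).indicator 1 t := by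
  have hτ : 0 < T / (N + 1) := by positivity
  set W := weightWindow (T / (N + 1)) n
  have hreal : aWeight T N n t ≤ W.indicator 1 t + W.indicator 1 t := by
    have hupper := indicator_le_indicator_one (g := fun s => ((n : ℝ) * (T / (N + 1))
      + T / (N + 1) / 2 - s) / (T / (N + 1))) (Jint_subset_weightWindow hT le_rfl n.le_succ)
      (fun x hx => by
        rw [Jint_of_ne_zero (N := N) (by omega), mem_Icc] at hx
        rw [div_le_one hτ]
        linarith [hx.1]) t
    simp only [aWeight]
    split_ifs with h1
    · subst h1
      refine add_le_add (indicator_le_indicator_one (Jint_subset_weightWindow hT (by omega) le_rfl)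
        (fun _ _ => le_rfl) t) ?_
      simpa [add_comm] using hupper
    · refine add_le_add (indicator_le_indicator_one
        (Jint_subset_weightWindow hT (Nat.sub_le n 1) (by omega)) (fun x hx => ?_) t) hupper
      rw [Jint_of_ne_zero (N := N) (by omega), mem_Icc, Nat.cast_sub hn, Nat.cast_one] at hx
      rw [div_le_one hτ]
      linarith [hx.2]
  refine (ENNReal.ofReal_le_ofReal hreal).trans_eq ?_
  by_cases ht : t ∈ W <;> simp [ht, one_add_one_eq_two]

lemma weightWindow_subset_Icc (hT : 0 < T) {n : ℕ} (hn : n ≤ N) :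
    weightWindow (T / (N + 1)) n ⊆ Icc 0 T := by
  have hnN : (n : ℝ) + 1 / 2 ≤ N + 1 := by
    have : (n : ℝ) ≤ N := by exact_mod_cast hn
    linarith
  intro x hx
  refine ⟨(le_max_left _ _).trans hx.1, hx.2.trans ?_⟩
  calc ((n : ℝ) + 1 / 2) * (T / (N + 1)) ≤ (N + 1) * (T / (N + 1)) := by gcongr
    _ = T := by field_simp

lemma sub_mem_Icc_of_mem_weightWindow {τ s t : ℝ} {n : ℕ} (hs : s ∈ weightWindow τ n)
    (ht : t ∈ weightWindow τ n) : t - s ∈ Icc (-(2 * τ)) (2 * τ) := by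
  have hs₁ := (le_max_right _ _).trans hs.1
  have ht₁ := (le_max_right _ _).trans ht.1
  exact ⟨by linarith [hs.2], by linarith [ht.2]⟩

lemma sum_indicator_weightWindow_le_three {τ : ℝ} (hτ : 0 < τ) (F : Finset ℕ) (s : ℝ) :
    ∑ n ∈ F, (weightWindow τ n).indicator (1 : ℝ → ℝ≥0∞) s ≤ 3 := by
  classical
  simp only [indicator_apply, Pi.one_apply, Finset.sum_boole]
  refine Nat.cast_le.2 (Finset.card_le_of_forall_le_add (k := 2) fun m hm n hn => ?_)
  have hsm := (Finset.mem_filter.1 hm).2.2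
  have hsn := (le_max_right _ _).trans (Finset.mem_filter.1 hn).2.1
  have : ((n : ℝ) - 2 - m) * τ ≤ 0 := by linarith
  exact_mod_cast (by nlinarith : (n : ℝ) ≤ m + 2)

lemma sum_aWeight_mul_aWeight_le (hT : 0 < T) (s t : ℝ) :
    ∑ n ∈ Finset.Icc 1 N, ENNReal.ofReal (aWeight T N n s) * ENNReal.ofReal (aWeight T N n t)
      ≤ 12 * ((Icc (-(2 * (T / (N + 1)))) (2 * (T / (N + 1)))).indicator 1 (t - s)
        * ((Icc 0 T).indicator 1 s * (Icc 0 T).indicator 1 t)) := by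
  have hτ : 0 < T / (N + 1) := by positivity
  set w : ℕ → ℝ → ℝ≥0∞ := fun n => (weightWindow (T / (N + 1)) n).indicator 1
  set band : ℝ≥0∞ := (Icc (-(2 * (T / (N + 1)))) (2 * (T / (N + 1)))).indicator 1 (t - s)
    * ((Icc 0 T).indicator 1 s * (Icc 0 T).indicator 1 t)
  have hwindow : ∀ n ∈ Finset.Icc 1 N, w n s * w n t ≤ band * w n s := by
    intro n hn
    by_cases hs : s ∈ weightWindow (T / (N + 1)) n
    · by_cases ht : t ∈ weightWindow (T / (N + 1)) n
      · have hsub := weightWindow_subset_Icc hT (Finset.mem_Icc.1 hn).2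
        simp [w, band, hs, ht, hsub hs, hsub ht, sub_mem_Icc_of_mem_weightWindow hs ht]
      · simp [w, ht]
    · simp [w, hs]
  calc _ ≤ ∑ n ∈ Finset.Icc 1 N, 4 * (w n s * w n t) := Finset.sum_le_sum fun n hn =>
        (mul_le_mul' (aWeight_le_two_mul_indicator hT (Finset.mem_Icc.1 hn).1 s)
          (aWeight_le_two_mul_indicator hT (Finset.mem_Icc.1 hn).1 t)).trans_eq (by ring)
    _ ≤ ∑ n ∈ Finset.Icc 1 N, 4 * band * w n s := Finset.sum_le_sum fun n hn =>
        (mul_le_mul_right (hwindow n hn) 4).trans_eq (mul_assoc _ _ _).symm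
    _ ≤ 4 * band * 3 := by
        rw [← Finset.mul_sum]; gcongr; exact sum_indicator_weightWindow_le_three hτ _ s
    _ = _ := by ring

lemma sum_lintegral_aWeight_le (hT : 0 < T) (g : ℝ → ℝ → ℝ≥0∞) :
    ∑ n ∈ Finset.Icc 1 N,
        ∫⁻ s, ∫⁻ t, ENNReal.ofReal (aWeight T N n s) * ENNReal.ofReal (aWeight T N n t) * g s t
      ≤ 12 * ∫⁻ s, ∫⁻ t, (Icc (-(2 * (T / (N + 1)))) (2 * (T / (N + 1)))).indicator 1 (t - s)
        * ((Icc 0 T).indicator 1 s * (Icc 0 T).indicator 1 t) * g s t := by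
  calc _ ≤ ∫⁻ s, ∑ n ∈ Finset.Icc 1 N,
        ∫⁻ t, ENNReal.ofReal (aWeight T N n s) * ENNReal.ofReal (aWeight T N n t) * g s t :=
        sum_lintegral_le_lintegral_sum _ _
    _ ≤ ∫⁻ s, ∫⁻ t, ∑ n ∈ Finset.Icc 1 N,
        ENNReal.ofReal (aWeight T N n s) * ENNReal.ofReal (aWeight T N n t) * g s t :=
        lintegral_mono fun s => sum_lintegral_le_lintegral_sum _ _
    _ ≤ ∫⁻ s, ∫⁻ t, 12 * ((Icc (-(2 * (T / (N + 1)))) (2 * (T / (N + 1)))).indicator 1 (t - s)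
        * ((Icc 0 T).indicator 1 s * (Icc 0 T).indicator 1 t) * g s t) :=
        lintegral_mono fun s => lintegral_mono fun t => by
          rw [← Finset.sum_mul, ← mul_assoc]
          gcongr
          exact sum_aWeight_mul_aWeight_le hT s t
    _ = _ := by
        simp_rw [lintegral_const_mul' _ _ (by norm_num : (12 : ℝ≥0∞) ≠ ⊤)]

end Weights

lemma tempOsc_le_of_sqIncrementNorm_le {H : Type*} [NormedAddCommGroup H] {T : ℝ} {N : ℕ}
    {f : ℝ → H} (hT : 0 < T) (hf : StronglyMeasurable f) {R : ℝ≥0∞}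
    (hR : ∀ h ∈ Ioc 0 (2 * (T / (N + 1))), sqIncrementNorm T f h ≤ R) :
    tempOsc T N f ≤ 48 * R := by
  set τ := T / (N + 1)
  have hτ : ENNReal.ofReal τ ≠ 0 := (ENNReal.ofReal_pos.2 (by positivity)).ne'
  calc tempOsc T N f ≤ (ENNReal.ofReal τ)⁻¹ * (12 * (ENNReal.ofReal (2 * (2 * τ)) * R)) := by
        rw [tempOsc]
        gcongr
        exact (sum_lintegral_aWeight_le hT _).trans
          (by gcongr; exact lintegral_lintegral_band_le hf hR)
    _ = 48 * ((ENNReal.ofReal τ)⁻¹ * ENNReal.ofReal τ) * R := by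
        rw [show 2 * (2 * τ) = 4 * τ by ring, ENNReal.ofReal_mul (by norm_num),
          ENNReal.ofReal_ofNat]
        ring
    _ = 48 * R := by rw [ENNReal.inv_mul_cancel hτ ENNReal.ofReal_ne_top, mul_one]

lemma ENNReal.ofReal_two_mul_rpow_le {τ p : ℝ} (hp₀ : 0 ≤ p) (hp₂ : p ≤ 2) :
    ENNReal.ofReal (2 * τ) ^ p ≤ 4 * ENNReal.ofReal τ ^ p := by
  rw [ENNReal.ofReal_mul zero_le_two, ENNReal.mul_rpow_of_nonneg _ _ hp₀, ENNReal.ofReal_ofNat]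
  gcongr
  calc (2 : ℝ≥0∞) ^ p ≤ 2 ^ (2 : ℝ) := ENNReal.rpow_le_rpow_of_exponent_le one_le_two hp₂
    _ = 4 := by rw [ENNReal.rpow_two]; norm_num

/-- Temporal oscillation bound, Besov case: for `α ∈ (0,1)` and `r ∈ [1,∞)` there is a
constant `C` depending only on `α` and `r` such that, whenever the Besov seminorm
`[f]_r = (∫_0^T h^{−rα} ‖τ_h f‖_{L²}^r dh/h)^{1/r}` is finite,
`(1/τ) Σ_{n=1}^N ∫∫ a_n(s) a_n(t) ‖f(s) − f(t)‖² dt ds ≤ C τ^{2α} [f]_r²`. -/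
theorem temporal_oscillation_besov (α : ℝ) (hα : α ∈ Set.Ioo (0 : ℝ) 1)
    (r : ℝ) (hr : 1 ≤ r) :
    ∃ C : ℝ, 0 < C ∧
      ∀ (H : Type) [NormedAddCommGroup H] [InnerProductSpace ℝ H] [CompleteSpace H],
        ∀ (T : ℝ), 0 < T → ∀ (N : ℕ), 1 ≤ N → ∀ f : ℝ → H, StronglyMeasurable f →
          besovSemi T α r f ≠ ⊤ →
          tempOsc T N f
            ≤ ENNReal.ofReal C * ENNReal.ofReal (T / (N + 1)) ^ (2 * α)
              * besovSemi T α r f ^ 2 := by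
  refine ⟨3072, by norm_num, fun H _ _ _ T hT N hN f hf _ => ?_⟩
  have h2τ : 2 * (T / (N + 1)) ≤ T := by
    rw [mul_div_assoc', div_le_iff₀ (by positivity)]
    nlinarith [(Nat.one_le_cast (α := ℝ)).2 hN]
  have hincr : ∀ h ∈ Ioc 0 (2 * (T / (N + 1))), sqIncrementNorm T f h
      ≤ 64 * ENNReal.ofReal (T / (N + 1)) ^ (2 * α) * besovSemi T α r f ^ 2 := fun h hh =>
    calc sqIncrementNorm T f h ≤ 16 * ENNReal.ofReal h ^ (2 * α) * besovSemi T α r f ^ 2 :=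
          sqIncrementNorm_le_besovSemi hf hα.1.le hr hh.1 (hh.2.trans h2τ)
      _ ≤ 16 * ENNReal.ofReal (2 * (T / (N + 1))) ^ (2 * α) * besovSemi T α r f ^ 2 := by
          gcongr
          · linarith [hα.1]
          · exact hh.2
      _ ≤ 16 * (4 * ENNReal.ofReal (T / (N + 1)) ^ (2 * α)) * besovSemi T α r f ^ 2 := by
          gcongr
          exact ENNReal.ofReal_two_mul_rpow_le (by linarith [hα.1]) (by linarith [hα.2])
      _ = _ := by ring
  calc tempOsc T N f
      ≤ 48 * (64 * ENNReal.ofReal (T / (N + 1)) ^ (2 * α) * besovSemi T α r f ^ 2) :=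
        tempOsc_le_of_sqIncrementNorm_le hT hf hincr
    _ = _ := by rw [ENNReal.ofReal_ofNat]; ring
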